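/- Let G be a locally compact second countable group acting properly by isometries on a proper pointed metric space, and let Q(G,X) be the space of quotients H\X for closed subgroups H ≤ G, with the pointed Gromov–Hausdorff topology. Then Q(G,X) is compact. -/

import Mathlib

open TopologicalSpace Filter Set MeasureTheory

def chabautySetTopology (Y : Type*) [TopologicalSpace Y] : TopologicalSpace (Set Y) :=
  TopologicalSpace.generateFrom
    ({S | ∃ K : Set Y, IsCompact K ∧ S = {F : Set Y | F ∩ K = ∅}} ∪
     {S | ∃ U : Set Y, IsOpen U ∧ S = {F : Set Y | (F ∩ U).Nonempty}})

def ChabautySub (G : Type*) [Group G] [TopologicalSpace G] :=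
  {H : Subgroup G // IsClosed (H : Set G)}

instance (G : Type*) [Group G] [TopologicalSpace G] : TopologicalSpace (ChabautySub G) :=
  TopologicalSpace.induced (fun H : ChabautySub G => (H.1 : Set G)) (chabautySetTopology G)

def conjClosed (G : Type*) [Group G] [TopologicalSpace G] [IsTopologicalGroup G]
    (g : G) (H : ChabautySub G) : ChabautySub G :=
  ⟨Subgroup.map (MulAut.conj g).toMonoidHom H.1, by
    have h : ((Subgroup.map (MulAut.conj g).toMonoidHom H.1 : Subgroup G) : Set G)
        = ((Homeomorph.mulLeft g).trans (Homeomorph.mulRight g⁻¹)) '' (H.1 : Set G) := by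
      rw [Subgroup.coe_map]
      exact Set.image_congr fun x _ => by simp [mul_assoc]
    rw [h]
    exact ((Homeomorph.mulLeft g).trans (Homeomorph.mulRight g⁻¹)).isClosedMap _ H.2⟩

/-- The trivial subgroup `{e}` as a point of the Chabauty space. -/
def trivialSub (G : Type*) [Group G] [TopologicalSpace G] [T1Space G] : ChabautySub G :=
  ⟨⊥, by rw [Subgroup.coe_bot]; exact isClosed_singleton⟩


/-- The quotient (pseudo)distance on `H\X`, computed on representatives in `X`. -/
noncomputable def quotDist {G : Type*} [Group G] [TopologicalSpace G] {X : Type*}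
    [MetricSpace X] [MulAction G X] (H : ChabautySub G) (x y : X) : ℝ :=
  ⨅ h : H.1, dist x ((h : G) • y)

/-- `R` is an `(ε, r)`-relation between the pointed quotient metric spaces
`(H\X, Hx₀)` and `(L\X, Lx₀)`, expressed via representatives in `X` with the quotient
distances. -/
def IsEpsRelation {G : Type*} [Group G] [TopologicalSpace G] {X : Type*}
    [MetricSpace X] [MulAction G X] (H L : ChabautySub G) (x₀ : X) (ε r : ℝ)
    (R : Set (X × X)) : Prop :=
  (x₀, x₀) ∈ R ∧
  (∀ p : X, quotDist H x₀ p ≤ r → ∃ q : X, quotDist L x₀ q ≤ r ∧ (p, q) ∈ R) ∧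
  (∀ q : X, quotDist L x₀ q ≤ r → ∃ p : X, quotDist H x₀ p ≤ r ∧ (p, q) ∈ R) ∧
  (∀ p q p' q' : X, (p, q) ∈ R → (p', q') ∈ R →
    |quotDist H p p' - quotDist L q q'| < ε)

set_option linter.unusedSectionVars false

section Aux

variable {G : Type*} [Group G] [TopologicalSpace G] {X : Type*} [MetricSpace X] [MulAction G X]

lemma quotDist_bddBelow (H : ChabautySub G) (x y : X) :
    BddBelow (Set.range fun h : H.1 => dist x ((h : G) • y)) :=
  ⟨0, by rintro _ ⟨h, rfl⟩; exact dist_nonneg⟩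

lemma quotDist_le (H : ChabautySub G) {h : G} (hh : h ∈ H.1) (x y : X) :
    quotDist H x y ≤ dist x (h • y) :=
  ciInf_le (quotDist_bddBelow H x y) ⟨h, hh⟩

lemma quotDist_le_dist (H : ChabautySub G) (x y : X) : quotDist H x y ≤ dist x y := by
  have := quotDist_le H H.1.one_mem x y
  rwa [one_smul] at this

lemma exists_of_quotDist_lt {H : ChabautySub G} {x y : X} {c : ℝ} (h : quotDist H x y < c) :
    ∃ g ∈ H.1, dist x (g • y) < c := by
  obtain ⟨⟨g, hg⟩, hlt⟩ := exists_lt_of_ciInf_lt h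
  exact ⟨g, hg, hlt⟩

lemma quotDist_smul_right (H : ChabautySub G) {g : G} (hg : g ∈ H.1) (x y : X) :
    quotDist H x (g • y) = quotDist H x y := by
  apply le_antisymm
  · refine le_ciInf fun h => ?_
    have := quotDist_le H (mul_mem h.2 (inv_mem hg)) x (g • y)
    rwa [smul_smul, inv_mul_cancel_right] at this
  · refine le_ciInf fun h => ?_
    have := quotDist_le H (mul_mem h.2 hg) x y
    rwa [← smul_smul] at this

lemma quotDist_smul_left (hisom : ∀ g : G, Isometry (fun x : X => g • x))
    (H : ChabautySub G) {g : G} (hg : g ∈ H.1) (x y : X) :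
    quotDist H (g • x) y = quotDist H x y := by
  apply le_antisymm
  · refine le_ciInf fun h => ?_
    have h1 := quotDist_le H (mul_mem hg h.2) (g • x) y
    have h2 : dist (g • x) ((g * (h : G)) • y) = dist x ((h : G) • y) := by
      rw [mul_smul]; exact (hisom g).dist_eq x ((h : G) • y)
    rwa [h2] at h1
  · refine le_ciInf fun h => ?_
    have h1 := quotDist_le H (mul_mem (inv_mem hg) h.2) x y
    have h2 : dist x ((g⁻¹ * (h : G)) • y) = dist (g • x) ((h : G) • y) := by
      rw [mul_smul]
      have := (hisom g⁻¹).dist_eq (g • x) ((h : G) • y)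
      rw [inv_smul_smul] at this
      exact this
    rwa [h2] at h1

end Aux

section Aux2

variable {G : Type*} [Group G] [TopologicalSpace G] {X : Type*} [MetricSpace X] [ProperSpace X] [MulAction G X] [ContinuousSMul G X]

lemma movers_compact (hproper : IsProperMap (fun p : G × X => (p.1 • p.2, p.2)))
    {C D : Set X} (hC : IsCompact C) (hD : IsCompact D) :
    IsCompact {g : G | ∃ y ∈ C, g • y ∈ D} := by
  have hpre := hproper.isCompact_preimage (hD.prod hC)
  have himg := hpre.image continuous_fst
  have heq : {g : G | ∃ y ∈ C, g • y ∈ D}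
      = Prod.fst '' ((fun p : G × X => (p.1 • p.2, p.2)) ⁻¹' (D ×ˢ C)) := by
    ext g
    constructor
    · rintro ⟨y, hy, hgy⟩
      exact ⟨(g, y), ⟨hgy, hy⟩, rfl⟩
    · rintro ⟨⟨g', y⟩, ⟨h1, h2⟩, rfl⟩
      exact ⟨y, h2, h1⟩
  rw [heq]; exact himg

lemma orbit_movers_compact (hproper : IsProperMap (fun p : G × X => (p.1 • p.2, p.2)))
    {D : Set X} (hD : IsCompact D) (p : X) : IsCompact {g : G | g • p ∈ D} := by
  have h := movers_compact hproper isCompact_singleton hD (C := {p})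
  have : {g : G | ∃ y ∈ ({p} : Set X), g • y ∈ D} = {g : G | g • p ∈ D} := by
    ext g; simp
  rwa [this] at h

lemma quotDist_attained (hproper : IsProperMap (fun p : G × X => (p.1 • p.2, p.2)))
    (H : ChabautySub G) {x y : X} {r : ℝ} (hle : quotDist H x y ≤ r) :
    ∃ g ∈ H.1, dist x (g • y) ≤ r := by
  obtain ⟨g₀, hg₀H, hg₀⟩ := exists_of_quotDist_lt (lt_of_le_of_lt hle (lt_add_one r))
  set S : Set G := (H.1 : Set G) ∩ {g : G | g • y ∈ Metric.closedBall x (r + 1)} with hS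
  have hScpt : IsCompact S :=
    (orbit_movers_compact hproper (isCompact_closedBall x (r + 1)) y).inter_left H.2
  have hg₀S : g₀ ∈ S := ⟨hg₀H, by simpa [Metric.mem_closedBall, dist_comm] using hg₀.le⟩
  have hcont : ContinuousOn (fun g : G => dist x (g • y)) S :=
    (continuous_const.dist (continuous_id.smul continuous_const)).continuousOn
  obtain ⟨gm, hgmS, hgm⟩ := hScpt.exists_isMinOn ⟨g₀, hg₀S⟩ hcont
  refine ⟨gm, hgmS.1, ?_⟩
  by_contra hcon
  push_neg at hcon
  obtain ⟨g₁, hg₁H, hg₁⟩ := exists_of_quotDist_lt (lt_of_le_of_lt hle hcon)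
  have hmin : dist x (gm • y) ≤ dist x (g₀ • y) := isMinOn_iff.mp hgm g₀ hg₀S
  have hg₁S : g₁ ∈ S := ⟨hg₁H, by
    have : dist x (g₁ • y) < r + 1 := hg₁.trans_le (hmin.trans hg₀.le)
    simpa [Metric.mem_closedBall, dist_comm] using this.le⟩
  exact absurd (isMinOn_iff.mp hgm g₁ hg₁S) (not_le.mpr hg₁)

end Aux2

section Aux3

variable {G : Type*} [Group G] [TopologicalSpace G] {X : Type*} [MetricSpace X] [MulAction G X]
  [ContinuousSMul G X]

lemma exists_nhd_uniform_close (hisom : ∀ g : G, Isometry (fun x : X => g • x))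
    {C : Set X} (hC : IsCompact C) {δ : ℝ} (hδ : 0 < δ) (g : G) :
    ∃ V : Set G, IsOpen V ∧ g ∈ V ∧ ∀ u ∈ V, ∀ y ∈ C, dist (g • y) (u • y) ≤ δ := by
  have hcover : C ⊆ ⋃ t ∈ C, Metric.ball t (δ / 4) := fun y hy =>
    mem_biUnion hy (Metric.mem_ball_self (by linarith))
  obtain ⟨T, hTC, hTfin, hTcover⟩ :=
    hC.elim_finite_subcover_image (fun t _ => Metric.isOpen_ball) hcover
  refine ⟨⋂ t ∈ T, (fun u : G => u • t) ⁻¹' Metric.ball (g • t) (δ / 2), ?_, ?_, ?_⟩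
  · exact hTfin.isOpen_biInter fun t _ =>
      Metric.isOpen_ball.preimage (continuous_id.smul continuous_const)
  · refine mem_iInter₂.mpr fun t _ => ?_
    simp only [mem_preimage, Metric.mem_ball, dist_self]
    linarith
  · intro u hu y hy
    obtain ⟨t, htT, hyt⟩ := mem_iUnion₂.mp (hTcover hy)
    have hyt' : dist y t < δ / 4 := Metric.mem_ball.mp hyt
    have h1 : dist (g • y) (g • t) = dist y t := (hisom g).dist_eq y t
    have h2 : dist (u • t) (u • y) = dist t y := (hisom u).dist_eq t y
    have h3 : dist (u • t) (g • t) < δ / 2 := Metric.mem_ball.mp (mem_iInter₂.mp hu t htT)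
    have h4 : dist (g • t) (u • t) < δ / 2 := by rwa [dist_comm] at h3
    have := dist_triangle4 (g • y) (g • t) (u • t) (u • y)
    rw [h1, h2] at this
    rw [dist_comm t y] at this
    linarith

end Aux3

/-- The "liminf" closed subgroup of a sequence of closed subgroups. -/
def limSub {G : Type*} [Group G] [TopologicalSpace G] [IsTopologicalGroup G]
    (Hs : ℕ → ChabautySub G) : ChabautySub G :=
  ⟨{ carrier := {g : G | ∀ U : Set G, IsOpen U → g ∈ U →
        ∀ᶠ n in Filter.atTop, (((Hs n).1 : Set G) ∩ U).Nonempty}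
     one_mem' := fun U hU h1U =>
       Filter.Eventually.of_forall fun n => ⟨1, (Hs n).1.one_mem, h1U⟩
     mul_mem' := by
       intro a b ha hb U hU habU
       have ho : IsOpen ((fun p : G × G => p.1 * p.2) ⁻¹' U) := hU.preimage continuous_mul
       obtain ⟨V, W, hV, hW, haV, hbW, hVW⟩ := isOpen_prod_iff.mp ho a b habU
       filter_upwards [ha V hV haV, hb W hW hbW] with n hn1 hn2
       obtain ⟨a', ha'H, ha'V⟩ := hn1
       obtain ⟨b', hb'H, hb'W⟩ := hn2
       exact ⟨a' * b', mul_mem ha'H hb'H, hVW (Set.mk_mem_prod ha'V hb'W)⟩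
     inv_mem' := by
       intro a ha U hU haU
       have hV : IsOpen ((fun g : G => g⁻¹) ⁻¹' U) := hU.preimage continuous_inv
       filter_upwards [ha _ hV (by simpa using haU)] with n hn
       obtain ⟨b, hbH, hbV⟩ := hn
       exact ⟨b⁻¹, inv_mem hbH, hbV⟩ },
   by
    rw [← isOpen_compl_iff]
    refine isOpen_iff_mem_nhds.mpr fun g hg => ?_
    have hg' : ¬ ∀ U : Set G, IsOpen U → g ∈ U →
        ∀ᶠ n in Filter.atTop, (((Hs n).1 : Set G) ∩ U).Nonempty := hg
    push_neg at hg'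
    obtain ⟨U, hU, hgU, hnot⟩ := hg'
    exact Filter.mem_of_superset (hU.mem_nhds hgU)
      fun g' hg' hmem => Filter.not_frequently.mpr ((hmem U hU hg').mono fun n hn => hn.ne_empty) hnot⟩

lemma mem_limSub_iff {G : Type*} [Group G] [TopologicalSpace G] [IsTopologicalGroup G]
    {Hs : ℕ → ChabautySub G} {g : G} :
    g ∈ (limSub Hs).1 ↔ ∀ U : Set G, IsOpen U → g ∈ U →
      ∀ᶠ n in Filter.atTop, (((Hs n).1 : Set G) ∩ U).Nonempty := Iff.rfl

lemma mem_limSub {G : Type*} [Group G] [TopologicalSpace G] [IsTopologicalGroup G]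
    {Hs : ℕ → ChabautySub G} {g : G} (hg : g ∈ (limSub Hs).1) :
    ∀ U : Set G, IsOpen U → g ∈ U →
      ∀ᶠ n in Filter.atTop, (((Hs n).1 : Set G) ∩ U).Nonempty := mem_limSub_iff.mp hg

lemma not_mem_limSub {G : Type*} [Group G] [TopologicalSpace G] [IsTopologicalGroup G]
    {Hs : ℕ → ChabautySub G} {g : G} (hg : g ∉ (limSub Hs).1) :
    ∃ U : Set G, IsOpen U ∧ g ∈ U ∧
      ¬ ∀ᶠ n in Filter.atTop, (((Hs n).1 : Set G) ∩ U).Nonempty := by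
  have hg' : ¬ ∀ U : Set G, IsOpen U → g ∈ U →
      ∀ᶠ n in Filter.atTop, (((Hs n).1 : Set G) ∩ U).Nonempty := fun h => hg (mem_limSub_iff.mpr h)
  push_neg at hg'
  obtain ⟨U, hU, hgU, hnot⟩ := hg'
  exact ⟨U, hU, hgU, fun h => Filter.not_frequently.mpr (h.mono fun n hn => hn.ne_empty) hnot⟩


/-- Let `G` be a locally compact second countable group acting
properly by isometries on a proper pointed metric space `(X, x₀)`.  Then the space of
quotients `Q(G,X) = H∖X for closed subgroups H` is compact in the pointed Gromov–Hausdorff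
topology: every sequence of closed subgroups has a subsequence whose quotients converge in
the pointed Gromov–Hausdorff sense (existence of `(ε, r)`-relations, eventually along the
subsequence, for all `ε, r > 0`) to the quotient by some closed subgroup. -/
theorem space_of_quotients_compact
    (G : Type*) [Group G] [TopologicalSpace G] [IsTopologicalGroup G]
    [LocallyCompactSpace G] [SecondCountableTopology G]
    (X : Type*) [MetricSpace X] [ProperSpace X] [MulAction G X]
    [ContinuousSMul G X]
    (hisom : ∀ g : G, Isometry (fun x : X => g • x))
    (hproper : IsProperMap (fun p : G × X => (p.1 • p.2, p.2)))
    (x₀ : X) :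
    ∀ H : ℕ → ChabautySub G, ∃ (Hlim : ChabautySub G) (φ : ℕ → ℕ), StrictMono φ ∧
      ∀ ε > (0 : ℝ), ∀ r > (0 : ℝ), ∀ᶠ n in Filter.atTop,
        ∃ R : Set (X × X), IsEpsRelation (H (φ n)) Hlim x₀ ε r R := by
  classical
  intro H
  -- countable basis, enumerated
  obtain ⟨B, hBc, hBemp, hBbasis⟩ := TopologicalSpace.exists_countable_basis G
  have hBne : B.Nonempty := by
    have h1 : (1 : G) ∈ ⋃₀ B := by rw [hBbasis.sUnion_eq]; trivial
    obtain ⟨s, hs, -⟩ := h1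
    exact ⟨s, hs⟩
  obtain ⟨f, hf⟩ := hBc.exists_eq_range hBne
  have hfopen : ∀ k, IsOpen (f k) := fun k =>
    hBbasis.isOpen (by rw [hf]; exact mem_range_self k)
  have hfbase : ∀ (u : G) (U : Set G), IsOpen U → u ∈ U → ∃ k, u ∈ f k ∧ f k ⊆ U := by
    intro u U hU huU
    obtain ⟨t, htB, hut, htU⟩ := hBbasis.exists_subset_of_mem_open huU hU
    rw [hf] at htB
    obtain ⟨k, rfl⟩ := htB
    exact ⟨k, hut, htU⟩
  -- subsequence extraction via Bool-valued sequences
  set F : ℕ → ℕ → Bool := fun n k => decide (((H n).1 : Set G) ∩ f k).Nonempty with hF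
  obtain ⟨L0, φ, hφ, hconv⟩ := CompactSpace.tendsto_subseq F
  have hdich : ∀ k, (∀ᶠ n in Filter.atTop, (((H (φ n)).1 : Set G) ∩ f k).Nonempty) ∨
      (∀ᶠ n in Filter.atTop, ((H (φ n)).1 : Set G) ∩ f k = ∅) := by
    intro k
    have hk : Tendsto (fun n => F (φ n) k) atTop (nhds (L0 k)) := by
      have := tendsto_pi_nhds.mp hconv k
      exact this
    have heq : ∀ᶠ n in atTop, F (φ n) k = L0 k := by
      have : nhds (L0 k) = pure (L0 k) := by rw [nhds_discrete]
      rw [this] at hk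
      exact tendsto_pure.mp hk
    cases hL : L0 k with
    | true =>
      left
      filter_upwards [heq] with n hn
      exact of_decide_eq_true (by rw [← hL]; exact hn)
    | false =>
      right
      filter_upwards [heq] with n hn
      exact Set.not_nonempty_iff_eq_empty.mp (of_decide_eq_false (by rw [← hL]; exact hn))
  set Hlim := limSub (fun n => H (φ n)) with hHlim
  refine ⟨Hlim, φ, hφ, ?_⟩
  intro ε hε r hr
  set ε₁ := ε / 8 with hε₁def
  have hε₁pos : 0 < ε₁ := by rw [hε₁def]; linarith
  set ρ := 4 * r + 4 + ε with hρdef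
  set C := Metric.closedBall x₀ ρ with hCdef
  have hCcpt : IsCompact C := isCompact_closedBall x₀ ρ
  set K : Set G := {g : G | ∃ y ∈ C, g • y ∈ C} with hKdef
  have hK : IsCompact K := movers_compact hproper hCcpt hCcpt
  -- Claim A: liminf direction
  have hA : ∀ᶠ n in atTop, ∀ g ∈ ((Hlim.1 : Set G) ∩ K), ∃ h' ∈ (H (φ n)).1,
      ∀ y ∈ C, dist (g • y) (h' • y) ≤ ε₁ := by
    have hLK : IsCompact ((Hlim.1 : Set G) ∩ K) := hK.inter_left Hlim.2
    choose V hVopen hVmem hVclose using fun g : G =>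
      exists_nhd_uniform_close hisom hCcpt (half_pos hε₁pos) g
    have hcover : (Hlim.1 : Set G) ∩ K ⊆ ⋃ g ∈ ((Hlim.1 : Set G) ∩ K), V g :=
      fun g hg => mem_biUnion hg (hVmem g)
    obtain ⟨T, hTsub, hTfin, hTcover⟩ :=
      hLK.elim_finite_subcover_image (fun g _ => hVopen g) hcover
    have hev : ∀ᶠ n in atTop, ∀ g ∈ T, (((H (φ n)).1 : Set G) ∩ V g).Nonempty :=
      (eventually_all_finite hTfin).mpr fun g hgT =>
        mem_limSub (hTsub hgT).1 (V g) (hVopen g) (hVmem g)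
    filter_upwards [hev] with n hn g hg
    obtain ⟨g₀, hg₀T, hgV⟩ := mem_iUnion₂.mp (hTcover hg)
    obtain ⟨h', hh'H, hh'V⟩ := hn g₀ hg₀T
    refine ⟨h', hh'H, fun y hy => ?_⟩
    have e1 : dist (g₀ • y) (g • y) ≤ ε₁ / 2 := hVclose g₀ g hgV y hy
    have e2 : dist (g₀ • y) (h' • y) ≤ ε₁ / 2 := hVclose g₀ h' hh'V y hy
    calc dist (g • y) (h' • y) ≤ dist (g • y) (g₀ • y) + dist (g₀ • y) (h' • y) :=
          dist_triangle _ _ _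
      _ ≤ ε₁ / 2 + ε₁ / 2 := by rw [dist_comm (g • y) (g₀ • y)]; linarith
      _ = ε₁ := by ring
  -- Claim B: limsup direction (uses the dichotomy)
  have hB : ∀ᶠ n in atTop, ∀ h' ∈ (((H (φ n)).1 : Set G) ∩ K), ∃ g ∈ Hlim.1,
      ∀ y ∈ C, dist (h' • y) (g • y) ≤ ε₁ := by
    choose V hVopen hVmem hVclose using fun g : G =>
      exists_nhd_uniform_close hisom hCcpt hε₁pos g
    set W : Set G := ⋃ g ∈ (Hlim.1 : Set G), V g with hWdef
    have hWopen : IsOpen W := isOpen_biUnion fun g _ => hVopen g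
    have hKW : IsCompact (K \ W) := hK.diff hWopen
    have hptwise : ∀ u ∈ K \ W, ∃ k, u ∈ f k ∧
        ∀ᶠ n in atTop, ((H (φ n)).1 : Set G) ∩ f k = ∅ := by
      intro u hu
      have huL : u ∉ Hlim.1 := fun hc => hu.2 (mem_biUnion hc (hVmem u))
      obtain ⟨U, hU, huU, hnot⟩ := not_mem_limSub huL
      obtain ⟨k, hk1, hk2⟩ := hfbase u U hU huU
      refine ⟨k, hk1, ?_⟩
      rcases hdich k with h | h
      · exact absurd (h.mono fun n hn => hn.mono (Set.inter_subset_inter_right _ hk2)) hnot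
      · exact h
    have hcov : K \ W ⊆
        ⋃ k ∈ {k : ℕ | ∀ᶠ n in atTop, ((H (φ n)).1 : Set G) ∩ f k = ∅}, f k := by
      intro u hu
      obtain ⟨k, h1, h2⟩ := hptwise u hu
      exact mem_biUnion h2 h1
    obtain ⟨T, hTsub, hTfin, hTcov⟩ :=
      hKW.elim_finite_subcover_image (fun k _ => hfopen k) hcov
    have hev : ∀ᶠ n in atTop, ∀ k ∈ T, ((H (φ n)).1 : Set G) ∩ f k = ∅ :=
      (eventually_all_finite hTfin).mpr fun k hk => hTsub hk
    filter_upwards [hev] with n hn h' hh'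
    have hW : h' ∈ W := by
      by_contra hWc
      obtain ⟨k, hkT, hk⟩ := mem_iUnion₂.mp (hTcov ⟨hh'.2, hWc⟩)
      have hemp := hn k hkT
      exact absurd (⟨h', hh'.1, hk⟩ : (((H (φ n)).1 : Set G) ∩ f k).Nonempty)
        (by rw [hemp]; exact Set.not_nonempty_empty)
    obtain ⟨g, hgL, hgV⟩ := mem_iUnion₂.mp hW
    exact ⟨g, hgL, fun y hy => by
      have := hVclose g h' hgV y hy; rwa [dist_comm] at this⟩
  -- Assembly of the (ε, r)-relation
  filter_upwards [hA, hB] with n hAn hBn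
  set Hn := H (φ n) with hHn
  refine ⟨{pq : X × X | quotDist Hn x₀ pq.1 ≤ r ∧ quotDist Hlim x₀ pq.2 ≤ r ∧
    ∃ h l : G, h ∈ Hn.1 ∧ l ∈ Hlim.1 ∧ dist x₀ (h • pq.1) ≤ r ∧
      dist x₀ (l • pq.2) ≤ r ∧ dist (h • pq.1) (l • pq.2) ≤ ε₁}, ?_, ?_, ?_, ?_⟩
  · refine ⟨(quotDist_le_dist Hn x₀ x₀).trans (by simp [hr.le]),
      (quotDist_le_dist Hlim x₀ x₀).trans (by simp [hr.le]),
      1, 1, Hn.1.one_mem, Hlim.1.one_mem, ?_, ?_, ?_⟩ <;> simp [hr.le, hε₁pos.le]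
  · intro p hp
    obtain ⟨h, hhH, hh⟩ := quotDist_attained hproper Hn hp
    refine ⟨h • p, (quotDist_le_dist Hlim x₀ (h • p)).trans hh,
      hp, (quotDist_le_dist Hlim x₀ (h • p)).trans hh,
      h, 1, hhH, Hlim.1.one_mem, hh, by simpa using hh, by simp [hε₁pos.le]⟩
  · intro q hq
    obtain ⟨l, hlL, hl⟩ := quotDist_attained hproper Hlim hq
    refine ⟨l • q, (quotDist_le_dist Hn x₀ (l • q)).trans hl,
      (quotDist_le_dist Hn x₀ (l • q)).trans hl, hq,
      1, l, Hn.1.one_mem, hlL, by simpa using hl, hl, by simp [hε₁pos.le]⟩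
  · rintro p q p' q' ⟨hp1, hq1, h, l, hhH, hlL, hhx, hlx, hhl⟩
      ⟨hp1', hq1', h', l', hh'H, hl'L, hh'x, hl'x, hh'l'⟩
    set a := h • p with ha
    set b := l • q with hb
    set a' := h' • p' with ha'
    set b' := l' • q' with hb'
    have hCa : a ∈ C := by
      rw [hCdef, Metric.mem_closedBall, dist_comm]; exact hhx.trans (by linarith)
    have hCb : b ∈ C := by
      rw [hCdef, Metric.mem_closedBall, dist_comm]; exact hlx.trans (by linarith)
    have hCa' : a' ∈ C := by
      rw [hCdef, Metric.mem_closedBall, dist_comm]; exact hh'x.trans (by linarith)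
    have hCb' : b' ∈ C := by
      rw [hCdef, Metric.mem_closedBall, dist_comm]; exact hl'x.trans (by linarith)
    -- rewriting quotient distances onto representatives
    have hdn : quotDist Hn a a' = quotDist Hn p p' := by
      rw [ha, ha', quotDist_smul_left hisom Hn hhH, quotDist_smul_right Hn hh'H]
    have hdl : quotDist Hlim b b' = quotDist Hlim q q' := by
      rw [hb, hb', quotDist_smul_left hisom Hlim hlL, quotDist_smul_right Hlim hl'L]
    have hdab : dist a a' ≤ 2 * r := by
      have := dist_triangle a x₀ a'
      rw [dist_comm a x₀] at this
      linarith
    have hdbb : dist b b' ≤ 2 * r := by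
      have := dist_triangle b x₀ b'
      rw [dist_comm b x₀] at this
      linarith
    have hln : quotDist Hlim b b' ≤ 2 * r := (quotDist_le_dist Hlim b b').trans hdbb
    have hdn2 : quotDist Hn a a' ≤ 2 * r := (quotDist_le_dist Hn a a').trans hdab
    have hnn : 0 ≤ quotDist Hlim b b' := le_ciInf fun h => dist_nonneg
    have hnn' : 0 ≤ quotDist Hn a a' := le_ciInf fun h => dist_nonneg
    -- upper bound: quotDist Hn ≤ quotDist Hlim + 3 ε₁
    have hupper : quotDist Hn a a' ≤ quotDist Hlim b b' + 4 * ε₁ := by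
      obtain ⟨m, hmL, hm⟩ :=
        exists_of_quotDist_lt (lt_add_of_pos_right (quotDist Hlim b b') hε₁pos)
      have hmK : m ∈ (Hlim.1 : Set G) ∩ K := by
        refine ⟨hmL, b', hCb', ?_⟩
        rw [hCdef, Metric.mem_closedBall, dist_comm]
        have := dist_triangle x₀ b (m • b')
        have hxb : dist x₀ b ≤ r := hlx
        have : dist x₀ (m • b') ≤ r + (quotDist Hlim b b' + ε₁) := by linarith
        refine this.trans ?_
        rw [hρdef, hε₁def]; linarith
      obtain ⟨hd, hhdH, hhd⟩ := hAn m hmK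
      have e1 : quotDist Hn a a' ≤ dist a (hd • a') := quotDist_le Hn hhdH a a'
      have e2 : dist (m • b') (hd • b') ≤ ε₁ := hhd b' hCb'
      have e3 : dist (hd • b') (hd • a') = dist b' a' := (hisom hd).dist_eq b' a'
      have e4 : dist b' a' ≤ ε₁ := by rw [dist_comm]; exact hh'l'
      have e6 := dist_triangle a b (m • b')
      have := dist_triangle4 a (m • b') (hd • b') (hd • a')
      rw [e3] at this
      linarith
    -- lower bound: quotDist Hlim ≤ quotDist Hn + 4 ε₁
    have hlower : quotDist Hlim b b' ≤ quotDist Hn a a' + 4 * ε₁ := by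
      obtain ⟨gd, hgdH, hgd⟩ :=
        exists_of_quotDist_lt (lt_add_of_pos_right (quotDist Hn a a') hε₁pos)
      have hgdK : gd ∈ ((Hn.1 : Set G) ∩ K) := by
        refine ⟨hgdH, a', hCa', ?_⟩
        rw [hCdef, Metric.mem_closedBall, dist_comm]
        have := dist_triangle x₀ a (gd • a')
        have : dist x₀ (gd • a') ≤ r + (quotDist Hn a a' + ε₁) := by linarith
        refine this.trans ?_
        rw [hρdef, hε₁def]; linarith
      obtain ⟨g, hgL, hg⟩ := hBn gd hgdK
      have e1 : quotDist Hlim b b' ≤ dist b (g • b') := quotDist_le Hlim hgL b b'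
      have e2 : dist (gd • a') (gd • b') = dist a' b' := (hisom gd).dist_eq a' b'
      have e3 : dist (gd • b') (g • b') ≤ ε₁ := hg b' hCb'
      have e4 : dist b a ≤ ε₁ := by rw [dist_comm]; exact hhl
      have t1 := dist_triangle4 b (gd • a') (gd • b') (g • b')
      have t2 := dist_triangle b a (gd • a')
      rw [e2] at t1
      have e5 : dist a' b' ≤ ε₁ := hh'l'
      linarith
    rw [← hdn, ← hdl, abs_sub_lt_iff]
    rw [hε₁def] at hupper hlower
    exact ⟨by linarith, by linarith⟩
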